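/- (Average case estimate) In dimension d ≥ 1, for any real coefficients α(R) we have 2^{-n} Σ_{|R| = 2^{-n}} |α(R)| ≤ C n^{(d-1)/2} ‖Σ_{|R| = 2^{-n}} α(R) h_R‖_{L^∞([0,1]^d)}, with constant C depending only on d. -/

import Mathlib

/-!
The functions `h_R`, `|R| = 2^{-n}`, are orthogonal in `L²([0,1]^d)` with `‖h_R‖₂² = 2^{-n}`:
in one variable, Haar functions of different levels are orthogonal because the coarser one is
constant on the support of the finer one, and Fubini handles the product. Hence
`‖H‖∞² ≥ ‖H‖₂² = 2^{-n} Σ α(R)²`. There are `2^n · #{r : |r| = n} ≤ 2^n (n+1)^{d-1}` rectangles,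
so Cauchy–Schwarz gives `2^{-n} Σ |α(R)| ≤ (n+1)^{(d-1)/2} ‖H‖∞ ≤ (2n)^{(d-1)/2} ‖H‖∞`.

The dyadic bookkeeping goes through `⌊2^m x⌋`, the index of the dyadic interval of length
`2^{-m}` containing `x`.
-/

open MeasureTheory Finset

noncomputable def haarN (k j : ℕ) (x : ℝ) : ℝ :=
  if x ∈ Set.Ico ((j : ℝ) / 2 ^ k) ((2 * j + 1 : ℝ) / 2 ^ (k + 1)) then -1
  else if x ∈ Set.Ico ((2 * j + 1 : ℝ) / 2 ^ (k + 1)) ((j + 1 : ℝ) / 2 ^ k) then 1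
  else 0

noncomputable def haarRect {d : ℕ} (r a : Fin d → ℕ) (x : Fin d → ℝ) : ℝ :=
  ∏ i, haarN (r i) (a i) (x i)

def unitCube (d : ℕ) : Set (Fin d → ℝ) := Set.univ.pi fun _ => Set.Ico (0 : ℝ) 1

def posFinset {d : ℕ} (r : Fin d → ℕ) : Finset (Fin d → ℕ) :=
  Fintype.piFinset fun i => Finset.range (2 ^ (r i))

def hypVecs (d n : ℕ) : Finset (Fin d → ℕ) :=
  (Fintype.piFinset fun _ : Fin d => Finset.range (n + 1)).filter fun r => ∑ i, r i = n

def dyadRect {d : ℕ} (r a : Fin d → ℕ) : Set (Fin d → ℝ) :=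
  Set.univ.pi fun i => Set.Ico ((a i : ℝ) / 2 ^ (r i)) (((a i : ℝ) + 1) / 2 ^ (r i))

def dyadicInterval (m : ℕ) (a : ℤ) : Set ℝ := Set.Ico (a / 2 ^ m) ((a + 1) / 2 ^ m)

lemma mem_dyadicInterval_iff {m : ℕ} {a : ℤ} {x : ℝ} :
    x ∈ dyadicInterval m a ↔ ⌊2 ^ m * x⌋ = a := by
  have h : (0 : ℝ) < 2 ^ m := by positivity
  rw [dyadicInterval, Set.mem_Ico, Int.floor_eq_iff, div_le_iff₀ h, lt_div_iff₀ h]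
  constructor <;> rintro ⟨h₁, h₂⟩ <;> constructor <;> linarith

lemma volume_real_dyadicInterval (m : ℕ) (a : ℤ) :
    volume.real (dyadicInterval m a) = (2 ^ m)⁻¹ := by
  rw [dyadicInterval, Real.volume_real_Ico_of_le (by gcongr; linarith)]
  ring

lemma measurableSet_dyadicInterval (m : ℕ) (a : ℤ) : MeasurableSet (dyadicInterval m a) :=
  measurableSet_Ico

lemma integrable_indicator_one_dyadicInterval (m : ℕ) (a : ℤ) :
    Integrable ((dyadicInterval m a).indicator (1 : ℝ → ℝ)) :=
  (integrable_indicator_iff (measurableSet_dyadicInterval m a)).2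
    (integrableOn_const (by simp [dyadicInterval]))

lemma integral_indicator_one_dyadicInterval (m : ℕ) (a : ℤ) :
    ∫ x, (dyadicInterval m a).indicator (1 : ℝ → ℝ) x = (2 ^ m)⁻¹ := by
  rw [MeasureTheory.integral_indicator_one (measurableSet_dyadicInterval m a),
    volume_real_dyadicInterval]

lemma floor_two_pow_mul_eq_ediv (m t : ℕ) (x : ℝ) :
    ⌊2 ^ m * x⌋ = ⌊2 ^ (m + t) * x⌋ / 2 ^ t := by
  have h : (2 : ℝ) ^ m * x = 2 ^ (m + t) * x / ((2 ^ t : ℕ) : ℝ) := by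
    push_cast; rw [pow_add]; field_simp
  rw [h, Int.floor_div_natCast]
  push_cast; rfl

lemma haarN_eq_ite_floor (k j : ℕ) (x : ℝ) :
    haarN k j x = if ⌊2 ^ (k + 1) * x⌋ = 2 * j then -1
      else if ⌊2 ^ (k + 1) * x⌋ = 2 * j + 1 then 1 else 0 := by
  have left : Set.Ico ((j : ℝ) / 2 ^ k) ((2 * j + 1 : ℝ) / 2 ^ (k + 1)) =
      dyadicInterval (k + 1) (2 * j) := by
    rw [dyadicInterval, pow_succ]; push_cast; congr 1; field_simp
  have right : Set.Ico ((2 * j + 1 : ℝ) / 2 ^ (k + 1)) ((j + 1 : ℝ) / 2 ^ k) =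
      dyadicInterval (k + 1) (2 * j + 1) := by
    rw [dyadicInterval, pow_succ]; push_cast; congr 1; field_simp; ring
  simp only [haarN, left, right, mem_dyadicInterval_iff]

lemma haarN_ne_zero_iff {k j : ℕ} {x : ℝ} : haarN k j x ≠ 0 ↔ ⌊2 ^ k * x⌋ = j := by
  rw [haarN_eq_ite_floor, floor_two_pow_mul_eq_ediv k 1, pow_one]
  generalize ⌊2 ^ (k + 1) * x⌋ = z
  split_ifs <;> norm_num <;> omega

lemma haarN_eq_indicator_sub (k j : ℕ) :
    haarN k j = (dyadicInterval (k + 1) (2 * j + 1)).indicator 1 -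
      (dyadicInterval (k + 1) (2 * j)).indicator 1 := by
  classical
  ext x
  simp only [Pi.sub_apply, Set.indicator_apply, mem_dyadicInterval_iff, haarN_eq_ite_floor,
    Pi.one_apply]
  generalize ⌊2 ^ (k + 1) * x⌋ = z
  split_ifs <;> first | omega | norm_num

lemma haarN_sq (k j : ℕ) (x : ℝ) :
    haarN k j x ^ 2 = (dyadicInterval k j).indicator 1 x := by
  classical
  rw [Set.indicator_apply, mem_dyadicInterval_iff, floor_two_pow_mul_eq_ediv k 1, pow_one,
    haarN_eq_ite_floor]
  generalize ⌊2 ^ (k + 1) * x⌋ = z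
  split_ifs <;> norm_num <;> omega

lemma abs_haarN_le_one (k j : ℕ) (x : ℝ) : |haarN k j x| ≤ 1 := by
  unfold haarN; split_ifs <;> norm_num

lemma integrable_haarN (k j : ℕ) : Integrable (haarN k j) := by
  rw [haarN_eq_indicator_sub]
  exact (integrable_indicator_one_dyadicInterval _ _).sub
    (integrable_indicator_one_dyadicInterval _ _)

lemma integral_haarN (k j : ℕ) : ∫ x, haarN k j x = 0 := by
  rw [haarN_eq_indicator_sub, integral_sub' (integrable_indicator_one_dyadicInterval _ _)
    (integrable_indicator_one_dyadicInterval _ _), integral_indicator_one_dyadicInterval,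
    integral_indicator_one_dyadicInterval, sub_self]

lemma haarN_eq_of_floor_eq {k m j : ℕ} (hkm : k < m) {x y : ℝ}
    (h : ⌊2 ^ m * x⌋ = ⌊2 ^ m * y⌋) : haarN k j x = haarN k j y := by
  obtain ⟨t, rfl⟩ := Nat.exists_eq_add_of_lt hkm
  rw [haarN_eq_ite_floor, haarN_eq_ite_floor, floor_two_pow_mul_eq_ediv (k + 1) t x,
    floor_two_pow_mul_eq_ediv (k + 1) t y, add_right_comm, h]

lemma haarN_mul_haarN_of_ne {k j j' : ℕ} (hj : j ≠ j') (x : ℝ) :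
    haarN k j x * haarN k j' x = 0 := by
  by_contra h
  obtain ⟨h₁, h₂⟩ := mul_ne_zero_iff.1 h
  exact hj (by exact_mod_cast (haarN_ne_zero_iff.1 h₁).symm.trans (haarN_ne_zero_iff.1 h₂))

lemma integral_haarN_mul_of_lt {k k' : ℕ} (h : k < k') (j j' : ℕ) :
    ∫ x, haarN k j x * haarN k' j' x = 0 := by
  have hconst : ∀ x, haarN k j x * haarN k' j' x = haarN k j (j' / 2 ^ k') * haarN k' j' x := by
    intro x
    by_cases hx : haarN k' j' x = 0
    · simp [hx]
    refine congrArg (· * _) (haarN_eq_of_floor_eq h ?_)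
    rw [haarN_ne_zero_iff.1 hx, mul_div_cancel₀ _ (by positivity), Int.floor_natCast]
  simp_rw [hconst, integral_const_mul, integral_haarN, mul_zero]

lemma integral_haarN_mul (k j k' j' : ℕ) :
    ∫ x, haarN k j x * haarN k' j' x = if k = k' ∧ j = j' then (2 ^ k)⁻¹ else 0 := by
  rcases lt_trichotomy k k' with h | rfl | h
  · rw [if_neg (by omega), integral_haarN_mul_of_lt h]
  · by_cases hj : j = j'
    · subst hj
      rw [if_pos ⟨rfl, rfl⟩, ← integral_indicator_one_dyadicInterval k j]
      simp_rw [← sq, haarN_sq]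
    · simp [hj, haarN_mul_haarN_of_ne hj]
  · rw [if_neg (by omega), ← integral_haarN_mul_of_lt h j' j]
    simp_rw [mul_comm]

lemma integrable_haarN_mul (k j k' j' : ℕ) :
    Integrable (fun x => haarN k j x * haarN k' j' x) :=
  (integrable_haarN k' j').bdd_mul (integrable_haarN k j).aestronglyMeasurable
    (.of_forall fun x => abs_haarN_le_one k j x)

lemma haarN_eq_zero_of_notMem {k j : ℕ} (hj : j < 2 ^ k) {x : ℝ} (hx : x ∉ Set.Ico 0 1) :
    haarN k j x = 0 := by
  by_contra h
  have hmem := mem_dyadicInterval_iff.2 (haarN_ne_zero_iff.1 h)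
  simp only [dyadicInterval, Set.mem_Ico, Int.cast_natCast] at hmem
  refine hx ⟨le_trans (by positivity) hmem.1, hmem.2.trans_le ?_⟩
  rw [div_le_one (by positivity)]
  exact_mod_cast hj

lemma haarRect_mul_haarRect {d : ℕ} (r a r' a' : Fin d → ℕ) (x : Fin d → ℝ) :
    haarRect r a x * haarRect r' a' x =
      ∏ i, haarN (r i) (a i) (x i) * haarN (r' i) (a' i) (x i) :=
  (prod_mul_distrib).symm

lemma integrable_haarRect_mul {d : ℕ} (r a r' a' : Fin d → ℕ) :
    Integrable (fun x => haarRect r a x * haarRect r' a' x) := by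
  simp_rw [haarRect_mul_haarRect]
  exact Integrable.fintype_prod (f := fun i t => haarN (r i) (a i) t * haarN (r' i) (a' i) t)
    fun i => integrable_haarN_mul _ _ _ _

lemma integral_haarRect_mul {d : ℕ} (r a r' a' : Fin d → ℕ) :
    ∫ x, haarRect r a x * haarRect r' a' x =
      if r = r' ∧ a = a' then (2 ^ ∑ i, r i)⁻¹ else 0 := by
  simp_rw [haarRect_mul_haarRect]
  rw [integral_fintype_prod_volume_eq_prod
    (fun i t => haarN (r i) (a i) t * haarN (r' i) (a' i) t)]
  simp_rw [integral_haarN_mul]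
  split_ifs with h
  · simp [h, prod_pow_eq_pow_sum]
  · obtain ⟨i, hi⟩ : ∃ i, ¬(r i = r' i ∧ a i = a' i) := by
      by_contra! hall
      exact h ⟨funext fun i => (hall i).1, funext fun i => (hall i).2⟩
    exact prod_eq_zero (mem_univ i) (if_neg hi)

lemma haarRect_eq_zero_of_notMem_unitCube {d : ℕ} {r a : Fin d → ℕ} (ha : a ∈ posFinset r)
    {x : Fin d → ℝ} (hx : x ∉ unitCube d) : haarRect r a x = 0 := by
  simp only [unitCube, Set.mem_pi, Set.mem_univ, true_implies, not_forall] at hx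
  obtain ⟨i, hi⟩ := hx
  exact prod_eq_zero (mem_univ i)
    (haarN_eq_zero_of_notMem (mem_range.1 (Fintype.mem_piFinset.1 ha i)) hi)

lemma setIntegral_unitCube_haarRect_mul {d : ℕ} {r a : Fin d → ℕ} (ha : a ∈ posFinset r)
    (r' a' : Fin d → ℕ) :
    ∫ x in unitCube d, haarRect r a x * haarRect r' a' x =
      if r = r' ∧ a = a' then (2 ^ ∑ i, r i)⁻¹ else 0 := by
  rw [setIntegral_eq_integral_of_forall_compl_eq_zero fun x hx => by
    rw [haarRect_eq_zero_of_notMem_unitCube ha hx, zero_mul], integral_haarRect_mul]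

instance isProbabilityMeasure_restrict_unitCube {d : ℕ} :
    IsProbabilityMeasure (volume.restrict (unitCube d)) :=
  ⟨by simp [unitCube, volume_pi_pi, Real.volume_Ico]⟩

lemma card_posFinset {d : ℕ} (r : Fin d → ℕ) : #(posFinset r) = 2 ^ ∑ i, r i := by
  simp [posFinset, prod_pow_eq_pow_sum]

lemma card_hypVecs_succ_le (d n : ℕ) : #(hypVecs (d + 1) n) ≤ (n + 1) ^ d := by
  let tails := Fintype.piFinset fun _ : Fin d => range (n + 1)
  -- a vector with coordinate sum `n` is determined by its last `d` coordinates
  have hsub : hypVecs (d + 1) n ⊆ tails.image fun t => Fin.cons (n - ∑ i, t i) t := by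
    intro r hr
    simp only [hypVecs, mem_filter, Fintype.mem_piFinset] at hr
    refine mem_image.2 ⟨Fin.tail r, Fintype.mem_piFinset.2 fun i => hr.1 i.succ, ?_⟩
    rw [← hr.2, Fin.sum_univ_succ]
    exact (congrArg (Fin.cons · _) (Nat.add_sub_cancel _ _)).trans (Fin.cons_self_tail r)
  calc #(hypVecs (d + 1) n) ≤ #tails := (card_le_card hsub).trans card_image_le
    _ = (n + 1) ^ d := by simp [tails]

lemma integral_sq_sum_of_orthogonal {X ι : Type*} [MeasurableSpace X] [DecidableEq ι]
    {μ : Measure X} {s : Finset ι} {f : ι → X → ℝ} {c : ℝ}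
    (hint : ∀ i ∈ s, ∀ j ∈ s, Integrable (fun x => f i x * f j x) μ)
    (horth : ∀ i ∈ s, ∀ j ∈ s, ∫ x, f i x * f j x ∂μ = if i = j then c else 0) (α : ι → ℝ) :
    ∫ x, (∑ i ∈ s, α i * f i x) ^ 2 ∂μ = c * ∑ i ∈ s, α i ^ 2 := by
  have hexpand : ∀ x, (∑ i ∈ s, α i * f i x) ^ 2 =
      ∑ i ∈ s, ∑ j ∈ s, α i * α j * (f i x * f j x) := fun x => by
    rw [sq, sum_mul_sum]
    exact sum_congr rfl fun i _ => sum_congr rfl fun j _ => mul_mul_mul_comm _ _ _ _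
  simp_rw [hexpand]
  rw [integral_finsetSum _ fun i hi =>
      integrable_finsetSum _ fun j hj => (hint i hi j hj).const_mul _,
    mul_sum]
  refine sum_congr rfl fun i hi => ?_
  rw [integral_finsetSum _ fun j hj => (hint i hi j hj).const_mul _]
  simp_rw [integral_const_mul]
  rw [sum_congr rfl fun j hj => by rw [horth i hi j hj]]
  simp only [mul_ite, mul_zero, sum_ite_eq, if_pos hi]
  ring

lemma integral_sq_le_eLpNorm_top_sq {X : Type*} [MeasurableSpace X] {μ : Measure X}
    [IsProbabilityMeasure μ] {f : X → ℝ} (hf : eLpNorm f ⊤ μ ≠ ⊤) :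
    ∫ x, f x ^ 2 ∂μ ≤ (eLpNorm f ⊤ μ).toReal ^ 2 := by
  have hbound : ∀ᵐ x ∂μ, f x ^ 2 ≤ (eLpNorm f ⊤ μ).toReal ^ 2 := by
    filter_upwards [ae_le_eLpNormEssSup (f := f) (μ := μ)] with x hx
    rw [← eLpNorm_exponent_top] at hx
    have habs : |f x| ≤ (eLpNorm f ⊤ μ).toReal := by
      simpa [Real.norm_eq_abs] using ENNReal.toReal_mono hf hx
    exact sq_le_sq' (neg_le_of_abs_le habs) (le_of_abs_le habs)
  calc ∫ x, f x ^ 2 ∂μ ≤ ∫ _, (eLpNorm f ⊤ μ).toReal ^ 2 ∂μ :=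
        integral_mono_of_nonneg (.of_forall fun x => sq_nonneg _) (integrable_const _) hbound
    _ = _ := by simp

lemma card_sigma_hypVecs_posFinset (d n : ℕ) :
    #((hypVecs d n).sigma posFinset) = #(hypVecs d n) * 2 ^ n := by
  rw [card_sigma, sum_congr rfl fun r hr => by rw [card_posFinset, (mem_filter.1 hr).2],
    sum_const, smul_eq_mul]

lemma integral_unitCube_sq_sum_haarRect (d n : ℕ) (α : (Fin d → ℕ) → (Fin d → ℕ) → ℝ) :
    ∫ x in unitCube d, (∑ r ∈ hypVecs d n, ∑ a ∈ posFinset r, α r a * haarRect r a x) ^ 2 =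
      (2 ^ n)⁻¹ * ∑ r ∈ hypVecs d n, ∑ a ∈ posFinset r, α r a ^ 2 := by
  have horth : ∀ p ∈ (hypVecs d n).sigma posFinset, ∀ q ∈ (hypVecs d n).sigma posFinset,
      ∫ x in unitCube d, haarRect p.1 p.2 x * haarRect q.1 q.2 x =
        if p = q then ((2 : ℝ) ^ n)⁻¹ else 0 := by
    intro p hp q _
    obtain ⟨hr, ha⟩ := mem_sigma.1 hp
    rw [setIntegral_unitCube_haarRect_mul ha, (mem_filter.1 hr).2]
    simp [Sigma.ext_iff]
  have hint : ∀ p ∈ (hypVecs d n).sigma posFinset, ∀ q ∈ (hypVecs d n).sigma posFinset,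
      IntegrableOn (fun x => haarRect p.1 p.2 x * haarRect q.1 q.2 x) (unitCube d) :=
    fun p _ q _ => (integrable_haarRect_mul p.1 p.2 q.1 q.2).integrableOn
  simp_rw [sum_sigma']
  exact integral_sq_sum_of_orthogonal hint horth (fun p => α p.1 p.2)

lemma sq_inv_two_pow_mul_sum_abs_le (d n : ℕ) (α : (Fin d → ℕ) → (Fin d → ℕ) → ℝ) :
    ((2 ^ n)⁻¹ * ∑ r ∈ hypVecs d n, ∑ a ∈ posFinset r, |α r a|) ^ 2 ≤ #(hypVecs d n) *
      ∫ x in unitCube d, (∑ r ∈ hypVecs d n, ∑ a ∈ posFinset r, α r a * haarRect r a x) ^ 2 := by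
  rw [integral_unitCube_sq_sum_haarRect]
  have hcs : (∑ r ∈ hypVecs d n, ∑ a ∈ posFinset r, |α r a|) ^ 2 ≤
      (#(hypVecs d n) * 2 ^ n : ℕ) * ∑ r ∈ hypVecs d n, ∑ a ∈ posFinset r, α r a ^ 2 := by
    simp_rw [sum_sigma', ← card_sigma_hypVecs_posFinset, ← sq_abs (α _ _)]
    exact sq_sum_le_card_mul_sum_sq
  calc ((2 ^ n)⁻¹ * ∑ r ∈ hypVecs d n, ∑ a ∈ posFinset r, |α r a|) ^ 2
      = ((2 : ℝ) ^ n)⁻¹ ^ 2 * (∑ r ∈ hypVecs d n, ∑ a ∈ posFinset r, |α r a|) ^ 2 := mul_pow ..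
    _ ≤ ((2 : ℝ) ^ n)⁻¹ ^ 2 *
        ((#(hypVecs d n) * 2 ^ n : ℕ) * ∑ r ∈ hypVecs d n, ∑ a ∈ posFinset r, α r a ^ 2) :=
      mul_le_mul_of_nonneg_left hcs (by positivity)
    _ = _ := by push_cast; field_simp

theorem stmt_9 (d : ℕ) (hd : 1 ≤ d) :
    ∃ C : ℝ, 0 < C ∧ ∀ n : ℕ, 1 ≤ n → ∀ α : (Fin d → ℕ) → (Fin d → ℕ) → ℝ,
      ENNReal.ofReal
          ((2 : ℝ) ^ (-(n : ℤ)) * ∑ r ∈ hypVecs d n, ∑ a ∈ posFinset r, |α r a|) ≤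
        ENNReal.ofReal (C * (n : ℝ) ^ (((d : ℝ) - 1) / 2)) *
          eLpNorm
            (fun x => ∑ r ∈ hypVecs d n, ∑ a ∈ posFinset r, α r a * haarRect r a x) ⊤
            (volume.restrict (unitCube d)) := by
  obtain ⟨d, rfl⟩ := Nat.exists_eq_add_of_le' hd
  refine ⟨2 ^ ((d : ℝ) / 2), by positivity, fun n hn α => ?_⟩
  set H := fun x => ∑ r ∈ hypVecs (d + 1) n, ∑ a ∈ posFinset r, α r a * haarRect r a x
  set μ := volume.restrict (unitCube (d + 1))
  have he : (((d + 1 : ℕ) : ℝ) - 1) / 2 = (d : ℝ) / 2 := by push_cast; ring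
  have hC : (0 : ℝ) < 2 ^ ((d : ℝ) / 2) * (n : ℝ) ^ ((d : ℝ) / 2) := by
    have : (0 : ℝ) < n := by exact_mod_cast hn
    positivity
  rw [he]
  rcases eq_or_ne (eLpNorm H ⊤ μ) ⊤ with htop | htop
  · rw [htop, ENNReal.mul_top (ENNReal.ofReal_pos.2 hC).ne']
    exact le_top
  rw [← ENNReal.ofReal_toReal htop, ← ENNReal.ofReal_mul hC.le, zpow_neg, zpow_natCast]
  refine ENNReal.ofReal_le_ofReal (le_of_sq_le_sq ?_ (by positivity))
  calc _ ≤ #(hypVecs (d + 1) n) * ∫ x in unitCube (d + 1), H x ^ 2 :=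
        sq_inv_two_pow_mul_sum_abs_le (d + 1) n α
    _ ≤ (2 * n : ℝ) ^ d * (eLpNorm H ⊤ μ).toReal ^ 2 := by
        gcongr
        · exact_mod_cast (card_hypVecs_succ_le d n).trans (Nat.pow_le_pow_left (by omega) d)
        · exact integral_sq_le_eLpNorm_top_sq htop
    _ = _ := by
        rw [← Real.mul_rpow zero_le_two (Nat.cast_nonneg n), mul_pow _ (ENNReal.toReal _),
          ← Real.rpow_mul_natCast (by positivity), Nat.cast_ofNat, div_mul_cancel₀ _ two_ne_zero,
          Real.rpow_natCast]
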